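/- Define the loss ℓ(y, θ) = ‖y - S(θ)‖² where S(θ) is the unique minimizer over X of the λ-strongly convex function f(·, θ). Suppose ‖x‖ ≤ B for all x ∈ X, ‖y‖ ≤ R, and the difference function h(x, θ₁, θ₂) = f(x, θ₁) - f(x, θ₂) satisfies |h(x,θ₁,θ₂) - h(x',θ₁,θ₂)| ≤ κ‖θ₁ - θ₂‖‖x - x'‖ for all x, x' ∈ X. Then |ℓ(y, θ₁) - ℓ(y, θ₂)| ≤ (4(B+R)κ/λ)‖θ₁ - θ₂‖ for all θ₁, θ₂ ∈ Θ. -/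

import Mathlib

/-!
Strong monotonicity of the gradient of `f(·, θ)` gives quadratic growth
`f(x, θ) ≥ f(S θ, θ) + λ/2 ‖x - S θ‖²` around the constrained minimizer: restrict to the
segment from `S θ` to `x` and use the first-order optimality condition at `S θ`. Adding the
growth inequalities for `θ₁` and `θ₂`, each evaluated at the other minimizer, leaves only the
difference function `h`, whence `λ ‖S θ₁ - S θ₂‖² ≤ κ ‖θ₁ - θ₂‖ ‖S θ₁ - S θ₂‖`. Finally
`x ↦ ‖y - x‖²` is `2(B + R)`-Lipschitz on `X`.
-/

open RealInnerProductSpace Set InnerProductSpace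

variable {E : Type*} [NormedAddCommGroup E] [InnerProductSpace ℝ E]

def StronglyMonotoneOn (g' : E → E) (lam : ℝ) (X : Set E) : Prop :=
  ∀ x ∈ X, ∀ y ∈ X, lam * ‖x - y‖ ^ 2 ≤ ⟪g' y - g' x, y - x⟫

theorem abs_norm_sq_sub_norm_sq_le {F : Type*} [SeminormedAddCommGroup F] (u v : F) :
    |‖u‖ ^ 2 - ‖v‖ ^ 2| ≤ (‖u‖ + ‖v‖) * ‖u - v‖ := by
  rw [sq_sub_sq, abs_mul, abs_of_nonneg (by positivity : 0 ≤ ‖u‖ + ‖v‖)]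
  exact mul_le_mul_of_nonneg_left (abs_norm_sub_norm_le u v) (by positivity)

variable [CompleteSpace E] {X : Set E} {g g₁ g₂ : E → ℝ} {g' g₁' g₂' : E → E} {lam : ℝ} {s x : E}

theorem IsMinOn.inner_sub_nonneg (hmin : IsMinOn g X s) (hX : Convex ℝ X) (hs : s ∈ X)
    {v : E} (hg : HasGradientAt g v s) (hx : x ∈ X) : 0 ≤ ⟪v, x - s⟫ :=
  hmin.localize.hasFDerivWithinAt_nonneg hg.hasFDerivAt.hasFDerivWithinAt
    (sub_mem_posTangentConeAt_of_segment_subset (hX.segment_subset hs hx))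

theorem StronglyMonotoneOn.add_inner_add_sq_le (hm : StronglyMonotoneOn g' lam X)
    (hX : Convex ℝ X) (hg : ∀ z ∈ X, HasGradientAt g (g' z) z) (hs : s ∈ X) (hx : x ∈ X) :
    g s + ⟪g' s, x - s⟫ + lam / 2 * ‖x - s‖ ^ 2 ≤ g x := by
  set d := x - s
  have hseg : ∀ t ∈ Icc (0 : ℝ) 1, s + t • d ∈ X := fun t ht => hX.add_smul_sub_mem hs hx ht
  -- `ψ' ≥ 0` on `(0, 1)` is strong monotonicity between `s` and `s + t • d`
  set ψ : ℝ → ℝ := fun t => g (s + t • d) - t * ⟪g' s, d⟫ - lam / 2 * ‖d‖ ^ 2 * t ^ 2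
  have hψ : ∀ t ∈ Icc (0 : ℝ) 1,
      HasDerivAt ψ (⟪g' (s + t • d), d⟫ - ⟪g' s, d⟫ - lam * ‖d‖ ^ 2 * t) t := by
    intro t ht
    have hline : HasDerivAt (fun t : ℝ => s + t • d) d t := by
      simpa using ((hasDerivAt_id t).smul_const d).const_add s
    have hcomp := (hg _ (hseg t ht)).hasFDerivAt.comp_hasDerivAt t hline
    refine ((hcomp.sub ((hasDerivAt_id t).mul_const ⟪g' s, d⟫)).sub
      ((hasDerivAt_pow 2 t).const_mul (lam / 2 * ‖d‖ ^ 2))).congr_deriv ?_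
    simp only [toDual_apply_apply]
    ring
  have hψ_nonneg : ∀ t ∈ interior (Icc (0 : ℝ) 1),
      0 ≤ ⟪g' (s + t • d), d⟫ - ⟪g' s, d⟫ - lam * ‖d‖ ^ 2 * t := by
    rw [interior_Icc]
    intro t ht
    have h := hm s hs _ (hseg t (Ioo_subset_Icc_self ht))
    rw [add_sub_cancel_left, sub_add_cancel_left, norm_neg, norm_smul, inner_smul_right,
      Real.norm_of_nonneg ht.1.le, inner_sub_left] at h
    nlinarith [ht.1]
  have hmono : MonotoneOn ψ (Icc 0 1) :=
    monotoneOn_of_hasDerivWithinAt_nonneg (convex_Icc 0 1)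
      (fun t ht => (hψ t ht).continuousAt.continuousWithinAt)
      (fun t ht => (hψ t (interior_subset ht)).hasDerivWithinAt) hψ_nonneg
  have h01 := hmono (left_mem_Icc.2 zero_le_one) (right_mem_Icc.2 zero_le_one) zero_le_one
  simp only [ψ, zero_smul, add_zero, one_smul, add_sub_cancel, d] at h01
  linarith

theorem IsMinOn.add_sq_le_of_stronglyMonotoneOn (hmin : IsMinOn g X s)
    (hm : StronglyMonotoneOn g' lam X) (hX : Convex ℝ X)
    (hg : ∀ z ∈ X, HasGradientAt g (g' z) z) (hs : s ∈ X) (hx : x ∈ X) :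
    g s + lam / 2 * ‖x - s‖ ^ 2 ≤ g x := by
  have hgrowth := hm.add_inner_add_sq_le hX hg hs hx
  have hfirst := hmin.inner_sub_nonneg hX hs (hg s hs) hx
  linarith

theorem norm_sub_le_div_of_isMinOn {s₁ s₂ : E} (hX : Convex ℝ X)
    (hg₁ : ∀ z ∈ X, HasGradientAt g₁ (g₁' z) z) (hg₂ : ∀ z ∈ X, HasGradientAt g₂ (g₂' z) z)
    (hm₁ : StronglyMonotoneOn g₁' lam X) (hm₂ : StronglyMonotoneOn g₂' lam X)
    (hs₁ : s₁ ∈ X) (hs₂ : s₂ ∈ X) (hmin₁ : IsMinOn g₁ X s₁) (hmin₂ : IsMinOn g₂ X s₂)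
    (hlam : 0 < lam) {L : ℝ} (hL : 0 ≤ L)
    (hdiff : |(g₁ s₂ - g₂ s₂) - (g₁ s₁ - g₂ s₁)| ≤ L * ‖s₂ - s₁‖) :
    ‖s₁ - s₂‖ ≤ L / lam := by
  have h₁ := hmin₁.add_sq_le_of_stronglyMonotoneOn hm₁ hX hg₁ hs₁ hs₂
  have h₂ := hmin₂.add_sq_le_of_stronglyMonotoneOn hm₂ hX hg₂ hs₂ hs₁
  have hsq : lam * ‖s₁ - s₂‖ ^ 2 ≤ (g₁ s₂ - g₂ s₂) - (g₁ s₁ - g₂ s₁) := by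
    rw [norm_sub_rev] at h₁
    linarith
  rw [norm_sub_rev s₂] at hdiff
  rw [le_div_iff₀' hlam]
  rcases (norm_nonneg (s₁ - s₂)).eq_or_lt with hzero | hpos
  · rw [← hzero, mul_zero]
    exact hL
  · nlinarith [le_abs_self ((g₁ s₂ - g₂ s₂) - (g₁ s₁ - g₂ s₁))]

theorem loss_lipschitz_in_parameter_general
    {n p : ℕ} (Θ : Set (EuclideanSpace ℝ (Fin p)))
    (X : Set (EuclideanSpace ℝ (Fin n)))
    (hXconvex : Convex ℝ X)
    (B R lam kappa : ℝ) (hlam : 0 < lam) (hkappa : 0 < kappa)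
    (hXbound : ∀ x ∈ X, ‖x‖ ≤ B)
    (f : EuclideanSpace ℝ (Fin n) → EuclideanSpace ℝ (Fin p) → ℝ)
    (f' : EuclideanSpace ℝ (Fin p) → EuclideanSpace ℝ (Fin n) → EuclideanSpace ℝ (Fin n))
    (hdiff : ∀ θ ∈ Θ, ∀ x, HasGradientAt (fun z => f z θ) (f' θ x) x)
    (hmono : ∀ θ ∈ Θ, ∀ x ∈ X, ∀ y ∈ X,
      lam * ‖x - y‖ ^ 2 ≤ ⟪f' θ y - f' θ x, y - x⟫)
    (S : EuclideanSpace ℝ (Fin p) → EuclideanSpace ℝ (Fin n))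
    (hSmem : ∀ θ ∈ Θ, S θ ∈ X)
    (hSmin : ∀ θ ∈ Θ, ∀ x ∈ X, f (S θ) θ ≤ f x θ)
    (hdiffLip : ∀ θ₁ ∈ Θ, ∀ θ₂ ∈ Θ, ∀ x ∈ X, ∀ x' ∈ X,
      |(f x θ₁ - f x θ₂) - (f x' θ₁ - f x' θ₂)| ≤ kappa * ‖θ₁ - θ₂‖ * ‖x - x'‖)
    (y : EuclideanSpace ℝ (Fin n)) (hy : ‖y‖ ≤ R) :
    ∀ θ₁ ∈ Θ, ∀ θ₂ ∈ Θ,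
      |‖y - S θ₁‖ ^ 2 - ‖y - S θ₂‖ ^ 2| ≤ 4 * (B + R) * kappa / lam * ‖θ₁ - θ₂‖ := by
  intro θ₁ hθ₁ θ₂ hθ₂
  have hS : ‖S θ₁ - S θ₂‖ ≤ kappa * ‖θ₁ - θ₂‖ / lam :=
    norm_sub_le_div_of_isMinOn hXconvex (fun z _ => hdiff θ₁ hθ₁ z) (fun z _ => hdiff θ₂ hθ₂ z)
      (hmono θ₁ hθ₁) (hmono θ₂ hθ₂) (hSmem θ₁ hθ₁) (hSmem θ₂ hθ₂)
      (isMinOn_iff.2 (hSmin θ₁ hθ₁)) (isMinOn_iff.2 (hSmin θ₂ hθ₂)) hlam (by positivity)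
      (hdiffLip θ₁ hθ₁ θ₂ hθ₂ _ (hSmem θ₂ hθ₂) _ (hSmem θ₁ hθ₁))
  have hloss : ∀ θ ∈ Θ, ‖y - S θ‖ ≤ B + R := fun θ hθ =>
    (norm_sub_le _ _).trans (by linarith [hXbound _ (hSmem θ hθ)])
  have hBR : 0 ≤ B + R := (norm_nonneg _).trans (hloss θ₁ hθ₁)
  calc |‖y - S θ₁‖ ^ 2 - ‖y - S θ₂‖ ^ 2|
      ≤ (‖y - S θ₁‖ + ‖y - S θ₂‖) * ‖S θ₁ - S θ₂‖ := by
        simpa only [sub_sub_sub_cancel_left, norm_sub_rev (S θ₂)] using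
          abs_norm_sq_sub_norm_sq_le (y - S θ₁) (y - S θ₂)
    _ ≤ 2 * (B + R) * (kappa * ‖θ₁ - θ₂‖ / lam) := by
        gcongr
        linarith [hloss θ₁ hθ₁, hloss θ₂ hθ₂]
    _ ≤ 4 * (B + R) * kappa / lam * ‖θ₁ - θ₂‖ := by
        have h : 0 ≤ (B + R) * (kappa * ‖θ₁ - θ₂‖ / lam) := mul_nonneg hBR (by positivity)
        linarith [show 4 * (B + R) * kappa / lam * ‖θ₁ - θ₂‖
          = 4 * ((B + R) * (kappa * ‖θ₁ - θ₂‖ / lam)) by ring]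

/-- Lipschitz continuity of the inverse-optimization loss `ℓ(y, θ) = ‖y - S(θ)‖²`
in the parameter `θ`, with modulus `4(B+R)κ/λ`. -/
theorem loss_lipschitz_in_parameter
    {n p : ℕ} (Θ : Set (EuclideanSpace ℝ (Fin p)))
    (X : Set (EuclideanSpace ℝ (Fin n)))
    (hXconvex : Convex ℝ X) (hXcompact : IsCompact X)
    (B R lam kappa : ℝ) (hB : 0 ≤ B) (hR : 0 ≤ R) (hlam : 0 < lam) (hkappa : 0 < kappa)
    (hXbound : ∀ x ∈ X, ‖x‖ ≤ B)
    (f : EuclideanSpace ℝ (Fin n) → EuclideanSpace ℝ (Fin p) → ℝ)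
    (f' : EuclideanSpace ℝ (Fin p) → EuclideanSpace ℝ (Fin n) → EuclideanSpace ℝ (Fin n))
    (hdiff : ∀ θ ∈ Θ, ∀ x, HasGradientAt (fun z => f z θ) (f' θ x) x)
    (hmono : ∀ θ ∈ Θ, ∀ x ∈ X, ∀ y ∈ X,
      lam * ‖x - y‖ ^ 2 ≤ ⟪f' θ y - f' θ x, y - x⟫)
    (S : EuclideanSpace ℝ (Fin p) → EuclideanSpace ℝ (Fin n))
    (hSmem : ∀ θ ∈ Θ, S θ ∈ X)
    (hSmin : ∀ θ ∈ Θ, ∀ x ∈ X, f (S θ) θ ≤ f x θ)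
    (hSunique : ∀ θ ∈ Θ, ∀ x ∈ X, (∀ z ∈ X, f x θ ≤ f z θ) → x = S θ)
    (hdiffLip : ∀ θ₁ ∈ Θ, ∀ θ₂ ∈ Θ, ∀ x ∈ X, ∀ x' ∈ X,
      |(f x θ₁ - f x θ₂) - (f x' θ₁ - f x' θ₂)| ≤ kappa * ‖θ₁ - θ₂‖ * ‖x - x'‖)
    (y : EuclideanSpace ℝ (Fin n)) (hy : ‖y‖ ≤ R) :
    ∀ θ₁ ∈ Θ, ∀ θ₂ ∈ Θ,
      |‖y - S θ₁‖ ^ 2 - ‖y - S θ₂‖ ^ 2| ≤ 4 * (B + R) * kappa / lam * ‖θ₁ - θ₂‖ :=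
  loss_lipschitz_in_parameter_general Θ X hXconvex B R lam kappa hlam hkappa hXbound f f' hdiff
    hmono S hSmem hSmin hdiffLip y hy
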